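/- arXiv:2411.03663 — 3 statements merged into one kernel-verified Lean document; each statement's English description precedes it below -/
import Mathlib

section
/- Let V be a finite set and let V_R and V_I be disjoint subsets of V. Let ℓ, ℓ' : V → E → ℝ be two families of functions on a finite-dimensional real inner product space E such that ℓ' v = ℓ v for every v ∈ V with v ∉ V_R ∪ V_I. Suppose θ_ref ∈ E is a stationary point of the full loss F_full(θ) := Σ_{v ∈ V} ℓ v θ, i.e. the gradient of F_full at θ_ref is 0, and suppose each ℓ v and ℓ' v is differentiable at θ_ref. Let F(θ) := Σ_{v ∈ V \ V_R} ℓ' v θ and suppose the Hessian H of F at θ_ref (the derivative at θ_ref of the gradient map of F) is an invertible continuous linear map E → E. Then the one-step Newton update of F at θ_ref satisfies θ_ref − H⁻¹ (∇F(θ_ref)) = θ_ref + H⁻¹ (∇(Σ_{v ∈ V_I ∪ V_R} ℓ v − Σ_{v ∈ V_I} ℓ' v)(θ_ref)); that is, the Newton update of the loss on the augmented graph can be computed using only the gradients of the losses of removed and influenced nodes. -/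
/-!
The augmented loss `Σ_{V \ V_R} ℓ'` differs from the full loss `Σ_V ℓ` exactly by
`Σ_{V_I ∪ V_R} ℓ − Σ_{V_I} ℓ'`, since `ℓ'` and `ℓ` agree outside `V_R ∪ V_I`. At a stationary
point of the full loss the gradient of the augmented loss is therefore minus the gradient of
this correction term.
-/

open scoped BigOperators

theorem Finset.sum_sdiff_eq_sum_sub_of_eqOn {ι M : Type*} [DecidableEq ι] [AddCommGroup M]
    {V VR VI : Finset ι} (hVR : VR ⊆ V) (hVI : VI ⊆ V) (hdisj : Disjoint VR VI)
    {f g : ι → M} (hfg : ∀ v ∈ V, v ∉ VR ∪ VI → g v = f v) :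
    ∑ v ∈ V \ VR, g v = ∑ v ∈ V, f v - (∑ v ∈ VI ∪ VR, f v - ∑ v ∈ VI, g v) := by
  have hVI_sub : VI ⊆ V \ VR := Finset.subset_sdiff.mpr ⟨hVI, hdisj.symm⟩
  have hrest : ∑ v ∈ V \ (VR ∪ VI), g v = ∑ v ∈ V \ (VR ∪ VI), f v :=
    Finset.sum_congr rfl fun v hv => hfg v (Finset.mem_sdiff.mp hv).1 (Finset.mem_sdiff.mp hv).2
  rw [← Finset.sum_sdiff hVI_sub, sdiff_sdiff_left, Finset.sup_eq_union, hrest,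
    ← Finset.sum_sdiff (Finset.union_subset hVR hVI), Finset.union_comm VI VR]
  abel

theorem gradient_fun_sub {𝕜 F : Type*} [RCLike 𝕜] [NormedAddCommGroup F] [InnerProductSpace 𝕜 F]
    [CompleteSpace F] {f g : F → 𝕜} {x : F} (hf : DifferentiableAt 𝕜 f x)
    (hg : DifferentiableAt 𝕜 g x) :
    gradient (fun y => f y - g y) x = gradient f x - gradient g x := by
  simp only [gradient, fderiv_fun_sub hf hg, map_sub]

theorem newton_update_gnn_approximation_general
    {E : Type*} [NormedAddCommGroup E] [InnerProductSpace ℝ E] [FiniteDimensional ℝ E]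
    {ι : Type*} [DecidableEq ι]
    (V VR VI : Finset ι) (hVR : VR ⊆ V) (hVI : VI ⊆ V) (hdisj : Disjoint VR VI)
    (ℓ ℓ' : ι → E → ℝ)
    (hagree : ∀ v ∈ V, v ∉ VR ∪ VI → ℓ' v = ℓ v)
    (θref : E)
    (hstat : gradient (fun θ => ∑ v ∈ V, ℓ v θ) θref = 0)
    (hdiff : ∀ v ∈ V, DifferentiableAt ℝ (ℓ v) θref)
    (hdiff' : ∀ v ∈ V, DifferentiableAt ℝ (ℓ' v) θref)
    (H : E ≃L[ℝ] E) :
    θref - H.symm (gradient (fun θ => ∑ v ∈ V \ VR, ℓ' v θ) θref) =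
      θref + H.symm
        (gradient (fun θ => ∑ v ∈ VI ∪ VR, ℓ v θ - ∑ v ∈ VI, ℓ' v θ) θref) := by
  set G := fun θ => ∑ v ∈ VI ∪ VR, ℓ v θ - ∑ v ∈ VI, ℓ' v θ
  have hloss : (fun θ => ∑ v ∈ V \ VR, ℓ' v θ) = fun θ => ∑ v ∈ V, ℓ v θ - G θ :=
    funext fun θ => Finset.sum_sdiff_eq_sum_sub_of_eqOn hVR hVI hdisj
      fun v hv hv' => congrFun (hagree v hv hv') θ
  have hG : DifferentiableAt ℝ G θref :=
    (DifferentiableAt.fun_sum fun v hv =>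
        hdiff v ((Finset.union_subset hVI hVR) hv)).sub
      (DifferentiableAt.fun_sum fun v hv => hdiff' v (hVI hv))
  have hgrad : gradient (fun θ => ∑ v ∈ V \ VR, ℓ' v θ) θref = -gradient G θref := by
    rw [hloss, gradient_fun_sub (DifferentiableAt.fun_sum fun v hv => hdiff v hv) hG, hstat,
      zero_sub]
  rw [hgrad, map_neg, sub_neg_eq_add]

/-- GNN model approximation (one-step Newton update): at a stationary point `θ_ref`
of the full loss, the Newton update of the augmented loss
`F(θ) = Σ_{v ∈ V \ V_R} ℓ' v θ` can be computed using only the gradients of the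
losses of removed and influenced nodes:
`θ_ref − H⁻¹∇F(θ_ref) = θ_ref + H⁻¹ ∇(Σ_{v ∈ V_I ∪ V_R} ℓ v − Σ_{v ∈ V_I} ℓ' v)(θ_ref)`. -/
theorem newton_update_gnn_approximation
    {E : Type*} [NormedAddCommGroup E] [InnerProductSpace ℝ E] [FiniteDimensional ℝ E]
    {ι : Type*} [DecidableEq ι]
    (V VR VI : Finset ι) (hVR : VR ⊆ V) (hVI : VI ⊆ V) (hdisj : Disjoint VR VI)
    (ℓ ℓ' : ι → E → ℝ)
    (hagree : ∀ v ∈ V, v ∉ VR ∪ VI → ℓ' v = ℓ v)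
    (θref : E)
    (hstat : gradient (fun θ => ∑ v ∈ V, ℓ v θ) θref = 0)
    (hdiff : ∀ v ∈ V, DifferentiableAt ℝ (ℓ v) θref)
    (hdiff' : ∀ v ∈ V, DifferentiableAt ℝ (ℓ' v) θref)
    (H : E ≃L[ℝ] E)
    (hH : (H : E →L[ℝ] E) =
      fderiv ℝ (fun θ => gradient (fun x => ∑ v ∈ V \ VR, ℓ' v x) θ) θref) :
    θref - H.symm (gradient (fun θ => ∑ v ∈ V \ VR, ℓ' v θ) θref) =
      θref + H.symm
        (gradient (fun θ => ∑ v ∈ VI ∪ VR, ℓ v θ - ∑ v ∈ VI, ℓ' v θ) θref) :=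
  newton_update_gnn_approximation_general V VR VI hVR hVI hdisj ℓ ℓ' hagree θref hstat hdiff hdiff'
    H
end

section
/- Let E be a finite-dimensional real inner product space and let F : E → ℝ be twice continuously differentiable such that the Hessian map θ ↦ ∇²F(θ) (taking values in continuous linear maps E → E with the operator norm) is Lipschitz with constant γ ≥ 0. Fix θ ∈ E, suppose H := ∇²F(θ) is invertible, and let d := −H⁻¹(∇F(θ)) be the Newton step, so θ' := θ + d. Then the residual gradient after one Newton step satisfies ‖∇F(θ')‖ ≤ γ · ‖d‖² = γ · ‖H⁻¹(∇F(θ))‖². -/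
open scoped NNReal

/-
A Newton step `d` solves the linearized equation `∇F(θ) + ∇²F(θ) d = 0`, so `∇F(θ + d)` is
exactly the error of the first-order Taylor expansion of `∇F` at `θ`. By the mean value
inequality applied to `∇F - ∇²F(θ)` on the segment `[θ, θ + d]`, along which the Hessian
moves by at most `γ‖d‖`, this error is at most `γ‖d‖ · ‖d‖`.
-/

section LipschitzDerivative

variable {E F : Type*} [NormedAddCommGroup E] [NormedSpace ℝ E]
  [NormedAddCommGroup F] [NormedSpace ℝ F] {g : E → F} {K : ℝ≥0}

theorem norm_sub_sub_fderiv_le_of_lipschitzWith_fderiv (hg : Differentiable ℝ g)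
    (hK : LipschitzWith K (fderiv ℝ g)) (x d : E) :
    ‖g (x + d) - g x - fderiv ℝ g x d‖ ≤ K * ‖d‖ ^ 2 := by
  have hx : x ∈ Metric.closedBall x ‖d‖ := Metric.mem_closedBall_self (norm_nonneg d)
  have hxd : x + d ∈ Metric.closedBall x ‖d‖ := by simp [dist_eq_norm]
  have bound : ∀ y ∈ Metric.closedBall x ‖d‖, ‖fderiv ℝ g y - fderiv ℝ g x‖ ≤ K * ‖d‖ :=
    fun y hy => by
      rw [← dist_eq_norm]
      exact (hK.dist_le_mul y x).trans (mul_le_mul_of_nonneg_left hy K.coe_nonneg)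
  calc ‖g (x + d) - g x - fderiv ℝ g x d‖
      = ‖g (x + d) - g x - fderiv ℝ g x (x + d - x)‖ := by rw [add_sub_cancel_left]
    _ ≤ K * ‖d‖ * ‖x + d - x‖ :=
      (convex_closedBall x ‖d‖).norm_image_sub_le_of_norm_fderiv_le' (fun y _ => hg y) bound
        hx hxd
    _ = K * ‖d‖ ^ 2 := by rw [add_sub_cancel_left, mul_assoc, sq]

theorem norm_apply_add_newton_step_le (hg : Differentiable ℝ g)
    (hK : LipschitzWith K (fderiv ℝ g)) {x d : E} (hd : fderiv ℝ g x d = -g x) :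
    ‖g (x + d)‖ ≤ K * ‖d‖ ^ 2 := by
  simpa [hd] using norm_sub_sub_fderiv_le_of_lipschitzWith_fderiv hg hK x d

end LipschitzDerivative

theorem ContDiff.differentiable_gradient {E : Type*} [NormedAddCommGroup E]
    [InnerProductSpace ℝ E] [CompleteSpace E] {F : E → ℝ} (hF : ContDiff ℝ 2 F) :
    Differentiable ℝ (gradient F) :=
  (InnerProductSpace.toDual ℝ E).symm.differentiable.comp
    ((hF.fderiv_right (by norm_num)).differentiable one_ne_zero)

/-- Residual gradient after one Newton step: if the Hessian of `F` is
`γ`-Lipschitz (in operator norm) and `H = ∇²F(θ)` is invertible, then the Newton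
step `d = −H⁻¹∇F(θ)`, `θ' = θ + d`, satisfies
`‖∇F(θ')‖ ≤ γ‖d‖² = γ‖H⁻¹∇F(θ)‖²`. -/
theorem newton_step_residual_bound
    {E : Type*} [NormedAddCommGroup E] [InnerProductSpace ℝ E] [FiniteDimensional ℝ E]
    (F : E → ℝ) (γ : ℝ) (hγ : 0 ≤ γ)
    (hF : ContDiff ℝ 2 F)
    (hLip : LipschitzWith γ.toNNReal (fun θ => fderiv ℝ (fun x => gradient F x) θ))
    (θ : E) (H : E ≃L[ℝ] E)
    (hH : (H : E →L[ℝ] E) = fderiv ℝ (fun x => gradient F x) θ)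
    (d : E) (hd : d = -(H.symm (gradient F θ))) :
    ‖gradient F (θ + d)‖ ≤ γ * ‖d‖ ^ 2 ∧
      γ * ‖d‖ ^ 2 = γ * ‖H.symm (gradient F θ)‖ ^ 2 := by
  have hNewton : fderiv ℝ (gradient F) θ d = -gradient F θ := by
    rw [← hH, hd]
    simp
  refine ⟨?_, by rw [hd, norm_neg]⟩
  simpa [Real.coe_toNNReal γ hγ] using
    norm_apply_add_newton_step_le hF.differentiable_gradient hLip hNewton
end

section
/- (Approximation error bound.) Let E be a finite-dimensional real inner product space. Let V be a finite set, let V_R and V_I be disjoint subsets of V with |V_R| < |V|, and let ℓ, ℓ' : V → E → ℝ be families of functions with ℓ' v = ℓ v for every v ∈ V with v ∉ V_R ∪ V_I. Let c₁ ≥ 0, γ₁ ≥ 0, λ > 0, and set c₂ := |V| − |V_R|. Assume: (i) each ℓ v and ℓ' v is differentiable with ‖∇(ℓ v)(θ)‖ ≤ c₁ and ‖∇(ℓ' v)(θ)‖ ≤ c₁ for all θ ∈ E; (ii) the augmented loss F(θ) := Σ_{v ∈ V \ V_R} ℓ' v θ is twice continuously differentiable and its Hessian map θ ↦ ∇²F(θ)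 is γ₁-Lipschitz in operator norm; (iii) F is (c₂·λ)-strongly convex, i.e. θ ↦ F(θ) − (c₂λ/2)‖θ‖² is convex; (iv) θ_ref ∈ E is a stationary point of the full loss Σ_{v ∈ V} ℓ v, i.e. its gradient at θ_ref is 0. Define the correction term Δ := ∇(Σ_{v ∈ V_I ∪ V_R} ℓ v − Σ_{v ∈ V_I} ℓ' v)(θ_ref) and the approximated parameter θ_aug := θ_ref + (∇²F(θ_ref))⁻¹(Δ) (the Hessian is invertible by (iii)). Then the gradient of F at θ_aug satisfies ‖∇F(θ_aug)‖ ≤ (γ₁ c₁² / (c₂² λ²)) · (|V_R| + 2|V_I|)². -/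
/-!
At `θ_ref` the stationarity of the full loss and the agreement of `ℓ` and `ℓ'` off `V_R ∪ V_I`
give `∇F(θ_ref) = -Δ`, so `θ_aug` is exactly the Newton step for `∇F` from `θ_ref`. Since the
Hessian is `γ₁`-Lipschitz, the residual of a Newton step of length `d` is at most `γ₁ d²`; strong
convexity bounds the Hessian below by `c₂λ`, so `d ≤ ‖Δ‖ / (c₂λ)`, and each gradient in `Δ`
contributes at most `c₁`.
-/

open Set InnerProductSpace

theorem Finset.sum_sdiff_eq_neg_sub_of_sum_eq_zero {ι M : Type*} [DecidableEq ι] [AddCommGroup M]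
    {s r i : Finset ι} (hr : r ⊆ s) (hi : i ⊆ s) (hri : Disjoint r i) {f f' : ι → M}
    (hf : ∑ v ∈ s, f v = 0) (hagree : ∀ v ∈ s, v ∉ r ∪ i → f' v = f v) :
    ∑ v ∈ s \ r, f' v = -(∑ v ∈ i ∪ r, f v - ∑ v ∈ i, f' v) := by
  have hi' : i ⊆ s \ r := fun v hv => mem_sdiff.2 ⟨hi hv, disjoint_right.1 hri hv⟩
  have hsplit : ∑ v ∈ s \ r, f' v = ∑ v ∈ s \ (r ∪ i), f' v + ∑ v ∈ i, f' v := by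
    rw [← show (s \ r) \ i = s \ (r ∪ i) from sdiff_sdiff_left, sum_sdiff hi']
  have hoff : ∑ v ∈ s \ (r ∪ i), f' v = ∑ v ∈ s \ (r ∪ i), f v :=
    sum_congr rfl fun v hv => hagree v (mem_sdiff.1 hv).1 (mem_sdiff.1 hv).2
  have hrest : ∑ v ∈ s \ (r ∪ i), f v = -∑ v ∈ i ∪ r, f v := by
    rw [union_comm i r]
    exact eq_neg_of_add_eq_zero_left ((sum_sdiff (union_subset hr hi)).trans hf)
  rw [hsplit, hoff, hrest]
  abel

theorem ConvexOn.nonneg_of_hasDerivAt2 {u ψ : ℝ → ℝ} {d t₀ : ℝ}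
    (hu : ConvexOn ℝ univ u) (hψ : ∀ t, HasDerivAt u (ψ t) t) (hd : HasDerivAt ψ d t₀) :
    0 ≤ d := by
  have hmono : Monotone ψ := by
    have := hu.monotoneOn_deriv fun t _ => (hψ t).differentiableAt
    rwa [funext fun t => (hψ t).deriv, monotoneOn_univ] at this
  exact hd.deriv ▸ hmono.deriv_nonneg

theorem norm_sub_sub_fderiv_apply_le_of_lipschitzWith_fderiv {E F : Type*}
    [NormedAddCommGroup E] [NormedSpace ℝ E] [NormedAddCommGroup F] [NormedSpace ℝ F]
    {g : E → F} {K : NNReal} (hg : Differentiable ℝ g) (hK : LipschitzWith K (fderiv ℝ g))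
    (x y : E) : ‖g y - g x - fderiv ℝ g x (y - x)‖ ≤ K * ‖y - x‖ ^ 2 := by
  have bound : ∀ z ∈ segment ℝ x y, ‖fderiv ℝ g z - fderiv ℝ g x‖ ≤ K * ‖y - x‖ := fun z hz =>
    calc ‖fderiv ℝ g z - fderiv ℝ g x‖ ≤ K * ‖z - x‖ := by
          simpa only [dist_eq_norm] using hK.dist_le_mul z x
      _ ≤ K * ‖y - x‖ := by gcongr; exact norm_sub_le_of_mem_segment hz
  refine ((convex_segment x y).norm_image_sub_le_of_norm_fderiv_le' (fun z _ => hg z) bound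
    (left_mem_segment ℝ x y) (right_mem_segment ℝ x y)).trans_eq ?_
  ring

theorem norm_le_div_of_mul_norm_sq_le_inner {E : Type*} [NormedAddCommGroup E]
    [InnerProductSpace ℝ E] {v w : E} {m : ℝ} (hm : 0 < m) (h : m * ‖v‖ ^ 2 ≤ ⟪w, v⟫_ℝ) :
    ‖v‖ ≤ ‖w‖ / m := by
  rw [le_div_iff₀ hm]
  rcases (norm_nonneg v).eq_or_lt with hv | hv
  · rw [← hv, zero_mul]
    exact norm_nonneg w
  · have : ‖v‖ * m * ‖v‖ ≤ ‖w‖ * ‖v‖ := by nlinarith [real_inner_le_norm w v]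
    exact le_of_mul_le_mul_right this hv

section Gradient

variable {E : Type*} [NormedAddCommGroup E] [InnerProductSpace ℝ E] [CompleteSpace E]

theorem ContDiff.differentiable_gradient_s9 {F : E → ℝ} {n : WithTop ℕ∞} (hF : ContDiff ℝ n F)
    (hn : 2 ≤ n) : Differentiable ℝ (gradient F) := by
  let fromDual : StrongDual ℝ E →L[ℝ] E :=
    (toDual ℝ E).symm.toAddEquiv.toAddMonoidHom.toRealLinearMap (toDual ℝ E).symm.continuous
  exact fromDual.differentiable.comp ((hF.fderiv_right (m := 1) hn).differentiable one_ne_zero)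

theorem HasGradientAt.fun_sub {f g : E → ℝ} {f' g' x : E} (hf : HasGradientAt f f' x)
    (hg : HasGradientAt g g' x) : HasGradientAt (fun y => f y - g y) (f' - g') x := by
  rw [hasGradientAt_iff_hasFDerivAt, map_sub]
  exact hf.hasFDerivAt.sub hg.hasFDerivAt

theorem HasGradientAt.fun_sum {ι : Type*} {u : Finset ι} {A : ι → E → ℝ} {A' : ι → E} {x : E}
    (h : ∀ i ∈ u, HasGradientAt (A i) (A' i) x) :
    HasGradientAt (fun y => ∑ i ∈ u, A i y) (∑ i ∈ u, A' i) x := by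
  rw [hasGradientAt_iff_hasFDerivAt, map_sum]
  exact HasFDerivAt.fun_sum fun i hi => (h i hi).hasFDerivAt

theorem mul_norm_sq_le_inner_fderiv_gradient_of_convexOn {F : E → ℝ} {m : ℝ} {x : E}
    (hF : Differentiable ℝ F) (hgrad : DifferentiableAt ℝ (gradient F) x)
    (hconv : ConvexOn ℝ univ fun θ => F θ - m / 2 * ‖θ‖ ^ 2) (v : E) :
    m * ‖v‖ ^ 2 ≤ ⟪fderiv ℝ (gradient F) x v, v⟫_ℝ := by
  let L : ℝ → E := AffineMap.lineMap x (x + v)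
  have hL : ∀ t, HasDerivAt L v t := fun t => by
    simpa using AffineMap.hasDerivAt_lineMap (a := x) (b := x + v) (x := t)
  have hL₀ : L 0 = x := AffineMap.lineMap_apply_zero _ _
  have hu : ConvexOn ℝ univ fun t => F (L t) - m / 2 * ‖L t‖ ^ 2 :=
    hconv.comp_affineMap (AffineMap.lineMap x (x + v))
  have hu' : ∀ t, HasDerivAt (fun t => F (L t) - m / 2 * ‖L t‖ ^ 2)
      (⟪gradient F (L t), v⟫_ℝ - m * ⟪L t, v⟫_ℝ) t := fun t => by
    have hFL : HasDerivAt (fun t => F (L t)) ⟪gradient F (L t), v⟫_ℝ t :=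
      (hF (L t)).hasGradientAt.hasFDerivAt.comp_hasDerivAt t (hL t)
    exact (hFL.fun_sub ((hL t).norm_sq.const_mul (m / 2))).congr_deriv (by ring)
  have hψ : HasDerivAt (fun t => ⟪gradient F (L t), v⟫_ℝ - m * ⟪L t, v⟫_ℝ)
      (⟪fderiv ℝ (gradient F) x v, v⟫_ℝ - m * ⟪v, v⟫_ℝ) 0 := by
    have hgL : HasDerivAt (fun t => gradient F (L t)) (fderiv ℝ (gradient F) x v) 0 := by
      rw [← hL₀] at hgrad ⊢
      exact hgrad.hasFDerivAt.comp_hasDerivAt 0 (hL 0)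
    have hconst := hasDerivAt_const (0 : ℝ) v
    exact ((hgL.inner ℝ hconst).fun_sub (((hL 0).inner ℝ hconst).const_mul m)).congr_deriv
      (by simp)
  have := hu.nonneg_of_hasDerivAt2 hu' hψ
  rw [real_inner_self_eq_norm_sq] at this
  linarith

variable {ι : Type*} [DecidableEq ι] {V VR VI : Finset ι} {ℓ ℓ' : ι → E → ℝ} {θ : E}

theorem hasGradientAt_correction (hVR : VR ⊆ V) (hVI : VI ⊆ V)
    (hℓ : ∀ v ∈ V, DifferentiableAt ℝ (ℓ v) θ) (hℓ' : ∀ v ∈ V, DifferentiableAt ℝ (ℓ' v) θ) :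
    HasGradientAt (fun θ => ∑ v ∈ VI ∪ VR, ℓ v θ - ∑ v ∈ VI, ℓ' v θ)
      (∑ v ∈ VI ∪ VR, gradient (ℓ v) θ - ∑ v ∈ VI, gradient (ℓ' v) θ) θ :=
  .fun_sub (.fun_sum fun v hv => (hℓ v (Finset.union_subset hVI hVR hv)).hasGradientAt)
    (.fun_sum fun v hv => (hℓ' v (hVI hv)).hasGradientAt)

theorem gradient_sum_sdiff_eq_neg_gradient_correction (hVR : VR ⊆ V) (hVI : VI ⊆ V)
    (hdisj : Disjoint VR VI) (hagree : ∀ v ∈ V, v ∉ VR ∪ VI → ℓ' v = ℓ v)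
    (hℓ : ∀ v ∈ V, DifferentiableAt ℝ (ℓ v) θ) (hℓ' : ∀ v ∈ V, DifferentiableAt ℝ (ℓ' v) θ)
    (hstat : gradient (fun θ => ∑ v ∈ V, ℓ v θ) θ = 0) :
    gradient (fun θ => ∑ v ∈ V \ VR, ℓ' v θ) θ =
      -gradient (fun θ => ∑ v ∈ VI ∪ VR, ℓ v θ - ∑ v ∈ VI, ℓ' v θ) θ := by
  rw [(hasGradientAt_correction hVR hVI hℓ hℓ').gradient,
    (HasGradientAt.fun_sum fun v hv => (hℓ' v (Finset.mem_sdiff.1 hv).1).hasGradientAt).gradient]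
  rw [(HasGradientAt.fun_sum fun v hv => (hℓ v hv).hasGradientAt).gradient] at hstat
  exact Finset.sum_sdiff_eq_neg_sub_of_sum_eq_zero hVR hVI hdisj hstat
    fun v hv hv' => by rw [hagree v hv hv']

theorem norm_gradient_correction_le {c : ℝ} (hVR : VR ⊆ V) (hVI : VI ⊆ V)
    (hdisj : Disjoint VR VI)
    (hℓ : ∀ v ∈ V, DifferentiableAt ℝ (ℓ v) θ) (hℓ' : ∀ v ∈ V, DifferentiableAt ℝ (ℓ' v) θ)
    (hgradℓ : ∀ v ∈ V, ‖gradient (ℓ v) θ‖ ≤ c) (hgradℓ' : ∀ v ∈ V, ‖gradient (ℓ' v) θ‖ ≤ c) :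
    ‖gradient (fun θ => ∑ v ∈ VI ∪ VR, ℓ v θ - ∑ v ∈ VI, ℓ' v θ) θ‖ ≤
      c * ((VR.card : ℝ) + 2 * (VI.card : ℝ)) := by
  rw [(hasGradientAt_correction hVR hVI hℓ hℓ').gradient]
  have hfull : ‖∑ v ∈ VI ∪ VR, gradient (ℓ v) θ‖ ≤ (VI ∪ VR).card * c := by
    simpa using norm_sum_le_of_le _ fun v hv => hgradℓ v (Finset.union_subset hVI hVR hv)
  have hinfl : ‖∑ v ∈ VI, gradient (ℓ' v) θ‖ ≤ VI.card * c := by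
    simpa using norm_sum_le_of_le _ fun v hv => hgradℓ' v (hVI hv)
  rw [Finset.card_union_of_disjoint hdisj.symm, Nat.cast_add] at hfull
  linarith [norm_sub_le (∑ v ∈ VI ∪ VR, gradient (ℓ v) θ) (∑ v ∈ VI, gradient (ℓ' v) θ)]

end Gradient

theorem gnn_approximation_error_bound_general
    {E : Type*} [NormedAddCommGroup E] [InnerProductSpace ℝ E] [FiniteDimensional ℝ E]
    {ι : Type*} [DecidableEq ι]
    (V VR VI : Finset ι) (hVR : VR ⊆ V) (hVI : VI ⊆ V) (hdisj : Disjoint VR VI)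
    (hcard : VR.card < V.card)
    (ℓ ℓ' : ι → E → ℝ)
    (hagree : ∀ v ∈ V, v ∉ VR ∪ VI → ℓ' v = ℓ v)
    (c₁ γ₁ lam : ℝ) (hγ₁ : 0 ≤ γ₁) (hlam : 0 < lam)
    (c₂ : ℝ) (hc₂ : c₂ = (V.card : ℝ) - (VR.card : ℝ))
    (hdiffℓ : ∀ v ∈ V, Differentiable ℝ (ℓ v))
    (hdiffℓ' : ∀ v ∈ V, Differentiable ℝ (ℓ' v))
    (hgradℓ : ∀ v ∈ V, ∀ θ : E, ‖gradient (ℓ v) θ‖ ≤ c₁)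
    (hgradℓ' : ∀ v ∈ V, ∀ θ : E, ‖gradient (ℓ' v) θ‖ ≤ c₁)
    (F : E → ℝ) (hFdef : F = fun θ => ∑ v ∈ V \ VR, ℓ' v θ)
    (hF : ContDiff ℝ 2 F)
    (hLip : LipschitzWith γ₁.toNNReal (fun θ => fderiv ℝ (fun x => gradient F x) θ))
    (hstrong : ConvexOn ℝ Set.univ (fun θ => F θ - (c₂ * lam / 2) * ‖θ‖ ^ 2))
    (θref : E)
    (hstat : gradient (fun θ => ∑ v ∈ V, ℓ v θ) θref = 0)
    (Δ : E)
    (hΔ : Δ = gradient (fun θ => ∑ v ∈ VI ∪ VR, ℓ v θ - ∑ v ∈ VI, ℓ' v θ) θref)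
    (H : E ≃L[ℝ] E)
    (hH : (H : E →L[ℝ] E) = fderiv ℝ (fun x => gradient F x) θref)
    (θaug : E) (hθaug : θaug = θref + H.symm Δ) :
    ‖gradient F θaug‖ ≤
      (γ₁ * c₁ ^ 2 / (c₂ ^ 2 * lam ^ 2)) *
        ((VR.card : ℝ) + 2 * (VI.card : ℝ)) ^ 2 := by
  have hm : 0 < c₂ * lam := mul_pos (by rw [hc₂, sub_pos]; exact_mod_cast hcard) hlam
  have hℓ := fun v hv => (hdiffℓ v hv).differentiableAt (x := θref)
  have hℓ' := fun v hv => (hdiffℓ' v hv).differentiableAt (x := θref)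
  have hgradF : Differentiable ℝ (gradient F) := hF.differentiable_gradient_s9 le_rfl
  have href : gradient F θref = -Δ := by
    rw [hFdef, hΔ]
    exact gradient_sum_sdiff_eq_neg_gradient_correction hVR hVI hdisj hagree hℓ hℓ' hstat
  have hΔle : ‖Δ‖ ≤ c₁ * ((VR.card : ℝ) + 2 * (VI.card : ℝ)) := hΔ ▸
    norm_gradient_correction_le hVR hVI hdisj hℓ hℓ' (fun v hv => hgradℓ v hv θref)
      (fun v hv => hgradℓ' v hv θref)
  have hcoer : c₂ * lam * ‖H.symm Δ‖ ^ 2 ≤ ⟪Δ, H.symm Δ⟫_ℝ := by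
    have := mul_norm_sq_le_inner_fderiv_gradient_of_convexOn
      (hF.differentiable two_ne_zero) (hgradF θref) hstrong (H.symm Δ)
    rwa [← hH, ContinuousLinearEquiv.coe_coe, ContinuousLinearEquiv.apply_symm_apply] at this
  have hstep : ‖θaug - θref‖ ≤ ‖Δ‖ / (c₂ * lam) := by
    rw [hθaug, add_sub_cancel_left]
    exact norm_le_div_of_mul_norm_sq_le_inner hm hcoer
  have hnewton : gradient F θaug =
      gradient F θaug - gradient F θref - fderiv ℝ (gradient F) θref (θaug - θref) := by
    rw [← hH, href, hθaug, add_sub_cancel_left, ContinuousLinearEquiv.coe_coe,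
      ContinuousLinearEquiv.apply_symm_apply, sub_neg_eq_add, add_sub_cancel_right]
  calc ‖gradient F θaug‖ ≤ γ₁ * ‖θaug - θref‖ ^ 2 := by
        rw [hnewton, ← Real.coe_toNNReal γ₁ hγ₁]
        exact norm_sub_sub_fderiv_apply_le_of_lipschitzWith_fderiv hgradF hLip θref θaug
    _ ≤ γ₁ * (c₁ * ((VR.card : ℝ) + 2 * (VI.card : ℝ)) / (c₂ * lam)) ^ 2 := by
        gcongr
        exact hstep.trans (by gcongr)
    _ = (γ₁ * c₁ ^ 2 / (c₂ ^ 2 * lam ^ 2)) * ((VR.card : ℝ) + 2 * (VI.card : ℝ)) ^ 2 := by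
        ring

/-- Approximation error bound (Theorem 2 of the paper): for the one-step Newton
approximation `θ_aug = θ_ref + H⁻¹Δ` of the model retrained on the augmented
graph, the residual gradient of the augmented loss satisfies
`‖∇F(θ_aug)‖ ≤ (γ₁c₁²/(c₂²λ²))·(|V_R| + 2|V_I|)²`. -/
theorem gnn_approximation_error_bound
    {E : Type*} [NormedAddCommGroup E] [InnerProductSpace ℝ E] [FiniteDimensional ℝ E]
    {ι : Type*} [DecidableEq ι]
    (V VR VI : Finset ι) (hVR : VR ⊆ V) (hVI : VI ⊆ V) (hdisj : Disjoint VR VI)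
    (hcard : VR.card < V.card)
    (ℓ ℓ' : ι → E → ℝ)
    (hagree : ∀ v ∈ V, v ∉ VR ∪ VI → ℓ' v = ℓ v)
    (c₁ γ₁ lam : ℝ) (hc₁ : 0 ≤ c₁) (hγ₁ : 0 ≤ γ₁) (hlam : 0 < lam)
    (c₂ : ℝ) (hc₂ : c₂ = (V.card : ℝ) - (VR.card : ℝ))
    (hdiffℓ : ∀ v ∈ V, Differentiable ℝ (ℓ v))
    (hdiffℓ' : ∀ v ∈ V, Differentiable ℝ (ℓ' v))
    (hgradℓ : ∀ v ∈ V, ∀ θ : E, ‖gradient (ℓ v) θ‖ ≤ c₁)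
    (hgradℓ' : ∀ v ∈ V, ∀ θ : E, ‖gradient (ℓ' v) θ‖ ≤ c₁)
    (F : E → ℝ) (hFdef : F = fun θ => ∑ v ∈ V \ VR, ℓ' v θ)
    (hF : ContDiff ℝ 2 F)
    (hLip : LipschitzWith γ₁.toNNReal (fun θ => fderiv ℝ (fun x => gradient F x) θ))
    (hstrong : ConvexOn ℝ Set.univ (fun θ => F θ - (c₂ * lam / 2) * ‖θ‖ ^ 2))
    (θref : E)
    (hstat : gradient (fun θ => ∑ v ∈ V, ℓ v θ) θref = 0)
    (Δ : E)
    (hΔ : Δ = gradient (fun θ => ∑ v ∈ VI ∪ VR, ℓ v θ - ∑ v ∈ VI, ℓ' v θ) θref)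
    (H : E ≃L[ℝ] E)
    (hH : (H : E →L[ℝ] E) = fderiv ℝ (fun x => gradient F x) θref)
    (θaug : E) (hθaug : θaug = θref + H.symm Δ) :
    ‖gradient F θaug‖ ≤
      (γ₁ * c₁ ^ 2 / (c₂ ^ 2 * lam ^ 2)) *
        ((VR.card : ℝ) + 2 * (VI.card : ℝ)) ^ 2 :=
  gnn_approximation_error_bound_general V VR VI hVR hVI hdisj hcard ℓ ℓ' hagree c₁ γ₁ lam hγ₁ hlam
    c₂ hc₂ hdiffℓ hdiffℓ' hgradℓ hgradℓ' F hFdef hF hLip hstrong θref hstat Δ hΔ H hH θaug hθaug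
end
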